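/- Consider on ℝ^d the mixed anchor ρ^i{}_J = (δ^i{}_j, β^{ij}) with β : ℝ^d → Mat_d(ℝ) differentiable, and a differentiable totally antisymmetric twist T_{IJK} with components (H_{ijk}, f_{ij}{}^k, Q_i{}^{jk}, R^{ijk}). Then: (i) condition (ca1) holds if and only if β^{(ij)} = 0, i.e. β is an antisymmetric bivector; and (ii) assuming β antisymmetric, condition (ca2) holds if and only if the three relations hold for all indices: f_{ij}{}^k + β^{kl} H_{lij} = 0; ∂_k β^{ij} − Q_k{}^{ji} + β^{jl} f_{lk}{}^i = 0; and β^{li} ∂_l β^{jk} − β^{lk} ∂_l β^{ji} − R^{jik} − β^{jl} Q_l{}^{ik} = 0. -/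

import Mathlib

open scoped BigOperators

noncomputable section

/-- Doubled index set: `I = 1,…,2d` realized as `Fin d ⊕ Fin d`;
`Sum.inl i` is the lower (vector) label `i`, `Sum.inr i` the upper (form) label `^i`. -/
abbrev DIdx (d : ℕ) := Fin d ⊕ Fin d

/-- The base space `ℝ^d`. -/
abbrev BSpace (d : ℕ) := Fin d → ℝ

/-- The constant split-signature metric `η = ((0,1_d),(1_d,0))`. -/
def eta {d : ℕ} : DIdx d → DIdx d → ℝ
  | Sum.inl i, Sum.inr j => if i = j then 1 else 0
  | Sum.inr i, Sum.inl j => if i = j then 1 else 0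
  | _, _ => 0

/-- Partial derivative `∂_i f (x)` on the base `ℝ^d`. -/
def pdb {d : ℕ} (f : BSpace d → ℝ) (i : Fin d) (x : BSpace d) : ℝ :=
  fderiv ℝ f x (Pi.single i 1)

/-- Weight-one antisymmetrization over three indices. -/
def asym3 {α : Type*} (G : α → α → α → ℝ) (a b c : α) : ℝ :=
  (1/6) * (G a b c - G a c b + G b c a - G b a c + G c a b - G c b a)

/-- Weight-one antisymmetrization over four indices. -/
def asym4 {α : Type*} (G : α → α → α → α → ℝ) (a b c e : α) : ℝ :=
  (1/24) * ∑ σ : Equiv.Perm (Fin 4),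
    ((Equiv.Perm.sign σ : ℤ) : ℝ) *
      G (![a,b,c,e] (σ 0)) (![a,b,c,e] (σ 1)) (![a,b,c,e] (σ 2)) (![a,b,c,e] (σ 3))

/-- Local Courant algebroid condition (ca1): `η^{IJ} ρ^i{}_I ρ^j{}_J = 0`. -/
def ca1 {d : ℕ} (r : BSpace d → Fin d → DIdx d → ℝ) : Prop :=
  ∀ (x : BSpace d) (i j : Fin d), ∑ I, ∑ J, eta I J * r x i I * r x j J = 0

/-- Local Courant algebroid condition (ca2):
`ρ^i{}_I ∂_i ρ^j{}_J − ρ^i{}_J ∂_i ρ^j{}_I = η^{KL} ρ^j{}_K T_{LIJ}`. -/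
def ca2 {d : ℕ} (r : BSpace d → Fin d → DIdx d → ℝ)
    (T : BSpace d → DIdx d → DIdx d → DIdx d → ℝ) : Prop :=
  ∀ (x : BSpace d) (j : Fin d) (I J : DIdx d),
    ∑ i, (r x i I * pdb (fun y => r y j J) i x - r x i J * pdb (fun y => r y j I) i x)
      = ∑ K, ∑ L, eta K L * r x j K * T x L I J

/-- Local Courant algebroid condition (ca3):
`4 ρ^i{}_{[L} ∂_i T_{IJK]} + 3 η^{MN} T_{M[IJ} T_{KL]N} = 0`. -/
def ca3 {d : ℕ} (r : BSpace d → Fin d → DIdx d → ℝ)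
    (T : BSpace d → DIdx d → DIdx d → DIdx d → ℝ) : Prop :=
  ∀ (x : BSpace d) (I J K L : DIdx d),
    4 * asym4 (fun a b c e => ∑ i, r x i a * pdb (fun y => T y b c e) i x) L I J K
      + 3 * asym4 (fun a b c e => ∑ M, ∑ N, eta M N * T x M a b * T x c e N) I J K L
      = 0

/-- The mixed anchor `ρ^i{}_J = (δ^i{}_j, β^{ij})`. -/
def rMix {d : ℕ} (β : BSpace d → Fin d → Fin d → ℝ) : BSpace d → Fin d → DIdx d → ℝ :=
  fun x i => Sum.elim (fun j => if i = j then (1:ℝ) else 0) (fun j => β x i j)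

/-! Contracting with `η` against the mixed anchor gives `η^{KL} ρ^j{}_K V_L = V^j + β^{jk} V_k`,
so (ca1) reads `β^{ji} + β^{ij} = 0`. Both sides of (ca2) are antisymmetric in `I, J`, so it
suffices to read it on the three blocks; since `δ` is constant, its left side vanishes on two
vector labels, is `∂_a β^{jb}` on mixed labels and the `β ∂ β` bracket on two form labels. Using
the cyclic symmetry of `T`, the blocks give the three relations, except that the mixed block comes
out as `∂_k β^{ij} = Q_k{}^{ji} + β^{il} f_{lk}{}^j`. By the first relation
`β^{il} f_{lk}{}^j = -β^{il} β^{jm} H_{mlk}`, which is antisymmetric in `i, j` because `H` is;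
this turns it into the stated form. -/

section

variable {d : ℕ}

lemma sum_eta_mul_rMix (β : BSpace d → Fin d → Fin d → ℝ) (x : BSpace d) (j : Fin d)
    (V : DIdx d → ℝ) :
    ∑ K, ∑ L, eta K L * rMix β x j K * V L = V (Sum.inr j) + ∑ k, β x j k * V (Sum.inl k) := by
  simp [Fintype.sum_sum_type, eta, rMix, ite_mul]

theorem ca1_rMix_iff (β : BSpace d → Fin d → Fin d → ℝ) :
    ca1 (rMix β) ↔ ∀ (x : BSpace d) (i j : Fin d), β x i j + β x j i = 0 := by
  have key : ∀ x i j, ∑ I, ∑ J, eta I J * rMix β x i I * rMix β x j J = β x j i + β x i j := by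
    intro x i j
    rw [sum_eta_mul_rMix β x i (rMix β x j)]
    simp [rMix]
  refine forall₃_congr fun x i j => ?_
  rw [key, add_comm]

def anchorBracket (r : BSpace d → Fin d → DIdx d → ℝ) (x : BSpace d) (j : Fin d)
    (I J : DIdx d) : ℝ :=
  ∑ i, (r x i I * pdb (fun y => r y j J) i x - r x i J * pdb (fun y => r y j I) i x)

def twistContraction (r : BSpace d → Fin d → DIdx d → ℝ)
    (T : BSpace d → DIdx d → DIdx d → DIdx d → ℝ) (x : BSpace d) (j : Fin d)
    (I J : DIdx d) : ℝ :=
  ∑ K, ∑ L, eta K L * r x j K * T x L I J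

lemma anchorBracket_swap (r : BSpace d → Fin d → DIdx d → ℝ) (x : BSpace d) (j : Fin d)
    (I J : DIdx d) : anchorBracket r x j J I = -anchorBracket r x j I J := by
  simp only [anchorBracket, ← Finset.sum_neg_distrib, neg_sub]

lemma twistContraction_swap (r : BSpace d → Fin d → DIdx d → ℝ)
    {T : BSpace d → DIdx d → DIdx d → DIdx d → ℝ}
    (hT : ∀ (x : BSpace d) (I J K : DIdx d), T x I J K = -T x I K J)
    (x : BSpace d) (j : Fin d) (I J : DIdx d) :
    twistContraction r T x j J I = -twistContraction r T x j I J := by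
  simp only [twistContraction, hT x _ J I, mul_neg, Finset.sum_neg_distrib]

lemma pdb_const (c : ℝ) (i : Fin d) (x : BSpace d) : pdb (fun _ => c) i x = 0 := by
  simp [pdb]

variable (β : BSpace d → Fin d → Fin d → ℝ) (x : BSpace d) (j : Fin d)

lemma anchorBracket_rMix_inl_inl (a b : Fin d) :
    anchorBracket (rMix β) x j (Sum.inl a) (Sum.inl b) = 0 := by
  simp [anchorBracket, rMix, pdb_const]

lemma anchorBracket_rMix_inl_inr (a b : Fin d) :
    anchorBracket (rMix β) x j (Sum.inl a) (Sum.inr b) = pdb (fun y => β y j b) a x := by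
  simp [anchorBracket, rMix, pdb_const]

lemma anchorBracket_rMix_inr_inr (a b : Fin d) :
    anchorBracket (rMix β) x j (Sum.inr a) (Sum.inr b)
      = ∑ i, (β x i a * pdb (fun y => β y j b) i x - β x i b * pdb (fun y => β y j a) i x) :=
  rfl

lemma twistContraction_rMix (T : BSpace d → DIdx d → DIdx d → DIdx d → ℝ) (I J : DIdx d) :
    twistContraction (rMix β) T x j I J
      = T x (Sum.inr j) I J + ∑ k, β x j k * T x (Sum.inl k) I J :=
  sum_eta_mul_rMix β x j fun L => T x L I J

end

section

variable {d : ℕ} {β : BSpace d → Fin d → Fin d → ℝ} {T : BSpace d → DIdx d → DIdx d → DIdx d → ℝ}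

lemma twist_cyclic (hT1 : ∀ (x : BSpace d) (I J K : DIdx d), T x I J K = -T x J I K)
    (hT2 : ∀ (x : BSpace d) (I J K : DIdx d), T x I J K = -T x I K J)
    (x : BSpace d) (I J K : DIdx d) : T x I J K = T x J K I := by
  rw [hT1, hT2, neg_neg]

lemma sum_sum_mul_mul_antisymm_swap (B H : Fin d → Fin d → ℝ) (hH : ∀ l m, H l m = -H m l)
    (i j : Fin d) :
    ∑ l, ∑ m, B i l * B j m * H m l = -∑ l, ∑ m, B j l * B i m * H m l := by
  rw [Finset.sum_comm, ← Finset.sum_neg_distrib]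
  refine Finset.sum_congr rfl fun m _ => ?_
  rw [← Finset.sum_neg_distrib]
  refine Finset.sum_congr rfl fun l _ => ?_
  rw [hH]
  ring

lemma sum_mul_f_add_swap_eq_zero (hT1 : ∀ (x : BSpace d) (I J K : DIdx d), T x I J K = -T x J I K)
    (hf : ∀ (x : BSpace d) (i j k : Fin d),
      T x (Sum.inl i) (Sum.inl j) (Sum.inr k)
        + ∑ l, β x k l * T x (Sum.inl l) (Sum.inl i) (Sum.inl j) = 0)
    (x : BSpace d) (k i j : Fin d) :
    ∑ l, β x i l * T x (Sum.inl l) (Sum.inl k) (Sum.inr j)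
      + ∑ l, β x j l * T x (Sum.inl l) (Sum.inl k) (Sum.inr i) = 0 := by
  have hf' : ∀ l q, T x (Sum.inl l) (Sum.inl k) (Sum.inr q)
      = -∑ m, β x q m * T x (Sum.inl m) (Sum.inl l) (Sum.inl k) :=
    fun l q => eq_neg_of_add_eq_zero_left (hf x l k q)
  simp only [hf', mul_neg, Finset.mul_sum, ← mul_assoc, Finset.sum_neg_distrib]
  rw [sum_sum_mul_mul_antisymm_swap (β x) (fun m l => T x (Sum.inl m) (Sum.inl l) (Sum.inl k))
    (fun m l => hT1 x _ _ _), neg_neg, add_neg_cancel]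

theorem ca2_rMix_iff (hT1 : ∀ (x : BSpace d) (I J K : DIdx d), T x I J K = -T x J I K)
    (hT2 : ∀ (x : BSpace d) (I J K : DIdx d), T x I J K = -T x I K J) :
    ca2 (rMix β) T ↔
      (∀ (x : BSpace d) (i j k : Fin d),
          T x (Sum.inl i) (Sum.inl j) (Sum.inr k)
            + ∑ l, β x k l * T x (Sum.inl l) (Sum.inl i) (Sum.inl j) = 0)
        ∧ (∀ (x : BSpace d) (k i j : Fin d),
          pdb (fun y => β y i j) k x
            - T x (Sum.inl k) (Sum.inr j) (Sum.inr i)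
            - ∑ l, β x i l * T x (Sum.inl l) (Sum.inl k) (Sum.inr j) = 0)
        ∧ (∀ (x : BSpace d) (i j k : Fin d),
          (∑ l, (β x l i * pdb (fun y => β y j k) l x
              - β x l k * pdb (fun y => β y j i) l x))
            - T x (Sum.inr j) (Sum.inr i) (Sum.inr k)
            - ∑ l, β x j l * T x (Sum.inl l) (Sum.inr i) (Sum.inr k) = 0) := by
  have hll : ∀ x j a b, anchorBracket (rMix β) x j (Sum.inl a) (Sum.inl b)
      = twistContraction (rMix β) T x j (Sum.inl a) (Sum.inl b) ↔
        T x (Sum.inl a) (Sum.inl b) (Sum.inr j)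
          + ∑ l, β x j l * T x (Sum.inl l) (Sum.inl a) (Sum.inl b) = 0 := by
    intro x j a b
    rw [anchorBracket_rMix_inl_inl, twistContraction_rMix, twist_cyclic hT1 hT2, eq_comm]
  have hlr : ∀ x j a b, anchorBracket (rMix β) x j (Sum.inl a) (Sum.inr b)
      = twistContraction (rMix β) T x j (Sum.inl a) (Sum.inr b) ↔
        pdb (fun y => β y j b) a x - T x (Sum.inl a) (Sum.inr b) (Sum.inr j)
          - ∑ l, β x j l * T x (Sum.inl l) (Sum.inl a) (Sum.inr b) = 0 := by
    intro x j a b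
    rw [anchorBracket_rMix_inl_inr, twistContraction_rMix, twist_cyclic hT1 hT2, sub_sub,
      sub_eq_zero]
  have hrr : ∀ x j a b, anchorBracket (rMix β) x j (Sum.inr a) (Sum.inr b)
      = twistContraction (rMix β) T x j (Sum.inr a) (Sum.inr b) ↔
        (∑ l, (β x l a * pdb (fun y => β y j b) l x - β x l b * pdb (fun y => β y j a) l x))
          - T x (Sum.inr j) (Sum.inr a) (Sum.inr b)
          - ∑ l, β x j l * T x (Sum.inl l) (Sum.inr a) (Sum.inr b) = 0 := by
    intro x j a b
    rw [anchorBracket_rMix_inr_inr, twistContraction_rMix, sub_sub, sub_eq_zero]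
  constructor
  · intro h
    exact ⟨fun x i j k => (hll x k i j).1 (h x k _ _), fun x k i j => (hlr x i k j).1 (h x i _ _),
      fun x i j k => (hrr x j i k).1 (h x j _ _)⟩
  · rintro ⟨h₁, h₂, h₃⟩ x j (a | a) (b | b)
    · exact (hll x j a b).2 (h₁ x a b j)
    · exact (hlr x j a b).2 (h₂ x a j b)
    · show anchorBracket _ x j _ _ = twistContraction _ T x j _ _
      rw [anchorBracket_swap, twistContraction_swap _ hT2, (hlr x j b a).2 (h₂ x b j a)]
    · exact (hrr x j a b).2 (h₃ x a j b)

end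

theorem statement18_general {d : ℕ} (β : BSpace d → Fin d → Fin d → ℝ)
    (T : BSpace d → DIdx d → DIdx d → DIdx d → ℝ)
    (hT1 : ∀ (x : BSpace d) (I J K : DIdx d), T x I J K = -T x J I K)
    (hT2 : ∀ (x : BSpace d) (I J K : DIdx d), T x I J K = -T x I K J) :
    (ca1 (rMix β) ↔ ∀ (x : BSpace d) (i j : Fin d), β x i j + β x j i = 0)
    ∧ ((∀ (x : BSpace d) (i j : Fin d), β x i j = -β x j i) →
        (ca2 (rMix β) T ↔
          ((∀ (x : BSpace d) (i j k : Fin d),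
              T x (Sum.inl i) (Sum.inl j) (Sum.inr k)
                + ∑ l, β x k l * T x (Sum.inl l) (Sum.inl i) (Sum.inl j) = 0)
            ∧ (∀ (x : BSpace d) (k i j : Fin d),
              pdb (fun y => β y i j) k x
                - T x (Sum.inl k) (Sum.inr j) (Sum.inr i)
                + ∑ l, β x j l * T x (Sum.inl l) (Sum.inl k) (Sum.inr i) = 0)
            ∧ (∀ (x : BSpace d) (i j k : Fin d),
              (∑ l, (β x l i * pdb (fun y => β y j k) l x
                  - β x l k * pdb (fun y => β y j i) l x))
                - T x (Sum.inr j) (Sum.inr i) (Sum.inr k)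
                - ∑ l, β x j l * T x (Sum.inl l) (Sum.inr i) (Sum.inr k) = 0)))) := by
  refine ⟨ca1_rMix_iff β, fun _ => ?_⟩
  rw [ca2_rMix_iff hT1 hT2]
  refine and_congr_right fun hf => and_congr_left fun _ => forall₄_congr fun x k i j => ?_
  have hsymm := sum_mul_f_add_swap_eq_zero hT1 hf x k i j
  constructor <;> intro h <;> linarith

/-- For the mixed anchor `(δ, β)` with totally antisymmetric twist
`T = (H, f, Q, R)`: (i) (ca1) holds iff `β` is an antisymmetric bivector; and (ii) for `β`
antisymmetric, (ca2) holds iff `f_{ij}{}^k + β^{kl} H_{lij} = 0`,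
`∂_k β^{ij} − Q_k{}^{ji} + β^{jl} f_{lk}{}^i = 0` and
`β^{li} ∂_l β^{jk} − β^{lk} ∂_l β^{ji} − R^{jik} − β^{jl} Q_l{}^{ik} = 0`. -/
theorem statement18 {d : ℕ} (β : BSpace d → Fin d → Fin d → ℝ)
    (hβd : ∀ i j : Fin d, Differentiable ℝ fun x => β x i j)
    (T : BSpace d → DIdx d → DIdx d → DIdx d → ℝ)
    (hTd : ∀ I J K : DIdx d, Differentiable ℝ fun x => T x I J K)
    (hT1 : ∀ (x : BSpace d) (I J K : DIdx d), T x I J K = -T x J I K)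
    (hT2 : ∀ (x : BSpace d) (I J K : DIdx d), T x I J K = -T x I K J) :
    (ca1 (rMix β) ↔ ∀ (x : BSpace d) (i j : Fin d), β x i j + β x j i = 0)
    ∧ ((∀ (x : BSpace d) (i j : Fin d), β x i j = -β x j i) →
        (ca2 (rMix β) T ↔
          ((∀ (x : BSpace d) (i j k : Fin d),
              T x (Sum.inl i) (Sum.inl j) (Sum.inr k)
                + ∑ l, β x k l * T x (Sum.inl l) (Sum.inl i) (Sum.inl j) = 0)
            ∧ (∀ (x : BSpace d) (k i j : Fin d),
              pdb (fun y => β y i j) k x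
                - T x (Sum.inl k) (Sum.inr j) (Sum.inr i)
                + ∑ l, β x j l * T x (Sum.inl l) (Sum.inl k) (Sum.inr i) = 0)
            ∧ (∀ (x : BSpace d) (i j k : Fin d),
              (∑ l, (β x l i * pdb (fun y => β y j k) l x
                  - β x l k * pdb (fun y => β y j i) l x))
                - T x (Sum.inr j) (Sum.inr i) (Sum.inr k)
                - ∑ l, β x j l * T x (Sum.inl l) (Sum.inr i) (Sum.inr k) = 0)))) :=
  statement18_general β T hT1 hT2
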